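/- Let a_1 ≤ a_2 ≤ ... ≤ a_q be real numbers (q ≥ 2), let ℓ_i = a_{i+1} − a_i, and let Δ = a_q − a_1. Suppose q is even. Then Σ_{1≤i<q} RC(i) = q · Σ_{1≤k≤q/2} (k·Δ − Σ_{1≤i<k} (k−i)·(ℓ_i + ℓ_{q−i})) − (q/2)·Σ_{1≤i≤q/2}(a_{i+q/2} − a_i), where RC(i) = Σ_{1≤j≤i} Σ_{i<m≤q} (a_m − a_j). -/

import Mathlib

/-- Cross-cut sum after i-th element. -/
noncomputable def RC (q : ℕ) (a : ℕ → ℝ) (i : ℕ) : ℝ :=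
  ∑ j ∈ Finset.Icc 1 i, ∑ m ∈ Finset.Icc (i + 1) q, (a m - a j)

section aux

variable (a : ℕ → ℝ)

/-- Splitting a prefix sum. -/
lemma sum_split {i q : ℕ} (h : i ≤ q) :
    (∑ m ∈ Finset.Icc 1 q, a m)
      = (∑ m ∈ Finset.Icc 1 i, a m) + ∑ m ∈ Finset.Icc (i + 1) q, a m := by
  rw [show (1:ℕ) = 0 + 1 from rfl, Finset.Icc_add_one_left_eq_Ioc, Finset.Icc_add_one_left_eq_Ioc,
    show Finset.Icc (i + (0 + 1)) q = Finset.Ioc i q from Finset.Icc_add_one_left_eq_Ioc i q,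
    Finset.sum_Ioc_consecutive _ (Nat.zero_le i) h]

/-- Shift reindexing. -/
lemma sum_shift (k n : ℕ) :
    (∑ i ∈ Finset.Icc 1 n, a (i + k)) = ∑ m ∈ Finset.Icc (1 + k) (n + k), a m := by
  rw [← Finset.map_add_right_Icc, Finset.sum_map]
  rfl

/-- Window sum in terms of prefix sums. -/
lemma window_eq {k q : ℕ} (h : k ≤ q) :
    (∑ i ∈ Finset.Icc 1 (q - k), (a (i + k) - a i))
      = (∑ m ∈ Finset.Icc 1 q, a m) - (∑ m ∈ Finset.Icc 1 k, a m)
        - ∑ m ∈ Finset.Icc 1 (q - k), a m := by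
  rw [Finset.sum_sub_distrib, sum_shift, Nat.sub_add_cancel h, sum_split a h]
  ring

/-- RC in terms of prefix sums. -/
lemma RC_eq {q i : ℕ} (h : i ≤ q) :
    RC q a i = (i : ℝ) * (∑ m ∈ Finset.Icc 1 q, a m)
      - (q : ℝ) * ∑ m ∈ Finset.Icc 1 i, a m := by
  unfold RC
  simp only [Finset.sum_sub_distrib, Finset.sum_const, Nat.card_Icc, nsmul_eq_mul]
  rw [← Finset.mul_sum]
  have h1 : (∑ m ∈ Finset.Icc (i + 1) q, a m)
      = (∑ m ∈ Finset.Icc 1 q, a m) - ∑ m ∈ Finset.Icc 1 i, a m := by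
    rw [sum_split a h]; ring
  rw [h1]
  have h2 : ((q + 1 - (i + 1) : ℕ) : ℝ) = (q : ℝ) - (i : ℝ) := by
    rw [show q + 1 - (i + 1) = q - i by omega, Nat.cast_sub h]
  have h3 : ((i + 1 - 1 : ℕ) : ℝ) = (i : ℝ) := by norm_num
  rw [h2, h3]
  ring

/-- Telescoping. -/
lemma telescope1 (k : ℕ) :
    (∑ i ∈ Finset.Icc 1 k, (a (i + 1) - a i)) = a (k + 1) - a 1 := by
  induction k with
  | zero => simp
  | succ n ih =>
    rw [Finset.sum_Icc_succ_top (by omega), ih]; ring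

/-- Abel summation 1. -/
lemma abel1 (k : ℕ) :
    (∑ i ∈ Finset.Icc 1 k, ((k + 1 - i : ℕ) : ℝ) * (a (i + 1) - a i))
      = (∑ m ∈ Finset.Icc 1 (k + 1), a m) - ((k : ℝ) + 1) * a 1 := by
  induction k with
  | zero => simp
  | succ n ih =>
    have hsplit : ∀ i ∈ Finset.Icc 1 (n + 1),
        ((n + 2 - i : ℕ) : ℝ) * (a (i + 1) - a i)
          = ((n + 1 - i : ℕ) : ℝ) * (a (i + 1) - a i) + (a (i + 1) - a i) := by
      intro i hi
      rw [Finset.mem_Icc] at hi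
      have : ((n + 2 - i : ℕ) : ℝ) = ((n + 1 - i : ℕ) : ℝ) + 1 := by
        have : n + 2 - i = (n + 1 - i) + 1 := by omega
        rw [this]; push_cast; ring
      rw [this]; ring
    rw [Finset.sum_congr rfl hsplit, Finset.sum_add_distrib]
    rw [show (∑ i ∈ Finset.Icc 1 (n+1), ((n + 1 - i : ℕ) : ℝ) * (a (i + 1) - a i))
        = ∑ i ∈ Finset.Icc 1 n, ((n + 1 - i : ℕ) : ℝ) * (a (i + 1) - a i) by
      rw [Finset.sum_Icc_succ_top (by omega)]; simp]
    rw [ih, telescope1, Finset.sum_Icc_succ_top (a := 1) (b := n + 1) (by omega)]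
    push_cast; ring

/-- Telescoping from the top. -/
lemma telescope2 {k q : ℕ} (h : k ≤ q) :
    (∑ i ∈ Finset.Icc 1 k, (a (q - i + 1) - a (q - i))) = a q - a (q - k) := by
  induction k with
  | zero => simp
  | succ n ih =>
    rw [Finset.sum_Icc_succ_top (by omega), ih (by omega)]
    have : q - n = (q - (n + 1)) + 1 := by omega
    rw [this]; ring

/-- Abel summation 2. -/
lemma abel2 {k q : ℕ} (h : k + 1 ≤ q) :
    (∑ i ∈ Finset.Icc 1 k, ((k + 1 - i : ℕ) : ℝ) * (a (q - i + 1) - a (q - i)))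
      = ((k : ℝ) + 1) * a q
        - ((∑ m ∈ Finset.Icc 1 q, a m) - ∑ m ∈ Finset.Icc 1 (q - (k + 1)), a m) := by
  induction k with
  | zero =>
    rw [show (Finset.Icc 1 0 : Finset ℕ) = ∅ by simp, Finset.sum_empty]
    have hs := sum_split a (show q - 1 ≤ q by omega)
    rw [Nat.sub_add_cancel (by omega), show Finset.Icc q q = {q} from Finset.Icc_self q,
      Finset.sum_singleton] at hs
    push_cast
    linarith
  | succ n ih =>
    have hsplit : ∀ i ∈ Finset.Icc 1 (n + 1),
        ((n + 2 - i : ℕ) : ℝ) * (a (q - i + 1) - a (q - i))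
          = ((n + 1 - i : ℕ) : ℝ) * (a (q - i + 1) - a (q - i))
            + (a (q - i + 1) - a (q - i)) := by
      intro i hi
      rw [Finset.mem_Icc] at hi
      have hc : ((n + 2 - i : ℕ) : ℝ) = ((n + 1 - i : ℕ) : ℝ) + 1 := by
        rw [show n + 2 - i = (n + 1 - i) + 1 by omega]; push_cast; ring
      rw [hc]; ring
    rw [Finset.sum_congr rfl hsplit, Finset.sum_add_distrib]
    rw [show (∑ i ∈ Finset.Icc 1 (n+1), ((n + 1 - i : ℕ) : ℝ) * (a (q - i + 1) - a (q - i)))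
        = ∑ i ∈ Finset.Icc 1 n, ((n + 1 - i : ℕ) : ℝ) * (a (q - i + 1) - a (q - i)) by
      rw [Finset.sum_Icc_succ_top (by omega)]; simp]
    rw [ih (by omega), telescope2 a (show n + 1 ≤ q by omega)]
    have hp : (∑ m ∈ Finset.Icc 1 (q - (n + 1)), a m)
        = (∑ m ∈ Finset.Icc 1 (q - (n + 2)), a m) + a (q - (n + 1)) := by
      rw [show q - (n + 1) = (q - (n + 2)) + 1 by omega,
        Finset.sum_Icc_succ_top (by omega)]
    rw [hp]
    push_cast
    ring

/-- Gauss sum over `Icc 1 n`. -/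
lemma gauss_icc (n : ℕ) : (∑ i ∈ Finset.Icc 1 n, i) * 2 = n * (n + 1) := by
  induction n with
  | zero => simp
  | succ m ih =>
    rw [Finset.sum_Icc_succ_top (by omega), add_mul, ih]
    ring

end aux

/-- For even q, the total cross-cut interaction decomposes as
q·Σ_{k≤q/2}(kΔ - Σ_{i<k}(k-i)(ℓ_i + ℓ_{q-i})) minus half-counted middle term. -/
theorem stmt16 (q : ℕ) (hq : 2 ≤ q) (hqe : Even q) (a : ℕ → ℝ)
    (hmono : ∀ i j, 1 ≤ i → i ≤ j → j ≤ q → a i ≤ a j) :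
    ∑ i ∈ Finset.Icc 1 (q - 1), RC q a i
      = (q : ℝ) * ∑ k ∈ Finset.Icc 1 (q / 2),
          ((k : ℝ) * (a q - a 1)
            - ∑ i ∈ Finset.Icc 1 (k - 1),
                ((k - i : ℕ) : ℝ) * ((a (i + 1) - a i) + (a (q - i + 1) - a (q - i))))
        - ((q / 2 : ℕ) : ℝ) * ∑ i ∈ Finset.Icc 1 (q / 2), (a (i + q / 2) - a i) := by
  obtain ⟨h2, hh2⟩ := hqe
  have hq2 : q / 2 = h2 := by omega
  obtain ⟨g, rfl⟩ : ∃ g, h2 = g + 1 := ⟨h2 - 1, by omega⟩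
  rw [hq2]
  have hqval : q = 2 * g + 2 := by omega
  -- LHS rewrite
  rw [Finset.sum_congr rfl (fun i hi => RC_eq a
    (show i ≤ q by rw [Finset.mem_Icc] at hi; omega))]
  -- RHS first sum rewrite
  have hB : ∀ k ∈ Finset.Icc 1 (g + 1),
      ((k : ℝ) * (a q - a 1)
        - ∑ i ∈ Finset.Icc 1 (k - 1),
            ((k - i : ℕ) : ℝ) * ((a (i + 1) - a i) + (a (q - i + 1) - a (q - i))))
      = (∑ m ∈ Finset.Icc 1 q, a m) - (∑ m ∈ Finset.Icc 1 (q - k), a m)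
          - ∑ m ∈ Finset.Icc 1 k, a m := by
    intro k hk
    rw [Finset.mem_Icc] at hk
    obtain ⟨j, rfl⟩ : ∃ j, k = j + 1 := ⟨k - 1, by omega⟩
    have hd : ∀ i ∈ Finset.Icc 1 (j + 1 - 1),
        ((j + 1 - i : ℕ) : ℝ) * ((a (i + 1) - a i) + (a (q - i + 1) - a (q - i)))
          = ((j + 1 - i : ℕ) : ℝ) * (a (i + 1) - a i)
            + ((j + 1 - i : ℕ) : ℝ) * (a (q - i + 1) - a (q - i)) := fun i _ => by ring
    rw [Finset.sum_congr rfl hd, Finset.sum_add_distrib,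
      show j + 1 - 1 = j from rfl, abel1, abel2 a (show j + 1 ≤ q by omega)]
    push_cast
    ring
  rw [Finset.sum_congr rfl hB]
  -- middle term
  have hC : (∑ i ∈ Finset.Icc 1 (g + 1), (a (i + (g + 1)) - a i))
      = (∑ m ∈ Finset.Icc 1 q, a m) - (∑ m ∈ Finset.Icc 1 (g + 1), a m)
          - ∑ m ∈ Finset.Icc 1 (g + 1), a m := by
    have hw := window_eq a (show g + 1 ≤ q by omega)
    rwa [show q - (g + 1) = g + 1 by omega] at hw
  rw [hC]
  -- expand everything
  rw [Finset.sum_sub_distrib, Finset.sum_sub_distrib, Finset.sum_sub_distrib,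
    ← Finset.sum_mul, ← Finset.mul_sum, Finset.sum_const, Nat.card_Icc, nsmul_eq_mul]
  -- reflection
  have hD : (∑ k ∈ Finset.Icc 1 (g + 1), ∑ m ∈ Finset.Icc 1 (q - k), a m)
      = ∑ k ∈ Finset.Icc (g + 1) (q - 1), ∑ m ∈ Finset.Icc 1 k, a m := by
    apply Finset.sum_nbij' (fun k => q - k) (fun k => q - k)
    · intro k hk; rw [Finset.mem_Icc] at *; omega
    · intro k hk; rw [Finset.mem_Icc] at *; omega
    · intro k hk; rw [Finset.mem_Icc] at hk; omega
    · intro k hk; rw [Finset.mem_Icc] at hk; omega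
    · intro k hk; rfl
  rw [hD]
  -- split the prefix-sum sums
  have hE : (∑ m ∈ Finset.Icc 1 (q - 1), ∑ j ∈ Finset.Icc 1 m, a j)
      = (∑ m ∈ Finset.Icc 1 g, ∑ j ∈ Finset.Icc 1 m, a j)
        + ∑ m ∈ Finset.Icc (g + 1) (q - 1), ∑ j ∈ Finset.Icc 1 m, a j := by
    rw [show Finset.Icc 1 (q - 1) = Finset.Ioc 0 (q - 1) from Finset.Icc_add_one_left_eq_Ioc 0 (q - 1),
      show Finset.Icc 1 g = Finset.Ioc 0 g from Finset.Icc_add_one_left_eq_Ioc 0 g, Finset.Icc_add_one_left_eq_Ioc g (q - 1),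
      Finset.sum_Ioc_consecutive _ (Nat.zero_le g) (show g ≤ q - 1 by omega)]
  rw [hE]
  have hF : (∑ k ∈ Finset.Icc 1 (g + 1), ∑ m ∈ Finset.Icc 1 k, a m)
      = (∑ m ∈ Finset.Icc 1 g, ∑ j ∈ Finset.Icc 1 m, a j)
        + ∑ j ∈ Finset.Icc 1 (g + 1), a j :=
    Finset.sum_Icc_succ_top (by omega) _
  rw [hF]
  -- Gauss sum
  have hq' : (q : ℝ) = 2 * (g : ℝ) + 2 := by rw [hqval]; push_cast; ring
  have hX : (∑ i ∈ Finset.Icc 1 (q - 1), (i : ℝ)) = ((g : ℝ) + 1) * ((q : ℝ) - 1) := by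
    have hg := gauss_icc (q - 1)
    have hg2 : ((∑ i ∈ Finset.Icc 1 (q - 1), i : ℕ) : ℝ) * 2
        = ((q - 1 : ℕ) : ℝ) * (((q - 1 : ℕ) : ℝ) + 1) := by exact_mod_cast hg
    rw [Nat.cast_sum] at hg2
    rw [Nat.cast_sub (by omega)] at hg2
    push_cast at hg2 ⊢
    nlinarith [hg2, hq']
  rw [hX]
  push_cast
  rw [hq']
  ring
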